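/- arXiv:2602.19924 — 3 statements merged into one kernel-verified Lean document; each statement's English description precedes it below -/
import Mathlib

section
/- For the curve f(x) = (x, x³), the derivative da/dx of the height function a(x) = −2x³/√(1+9x⁴) is divisible by dθ/dx, where θ(x) is the angle of the Gauss map ν(x) = (cos θ(x), sin θ(x)) = (1/√(1+9x⁴))·(−3x², 1); that is, there exists a real-analytic function b: ℝ → ℝ with da/dx = b(x)·dθ/dx for all x ∈ ℝ. -/
open Real
open scoped ContDiff

/-!
Differentiating `cos θ = u` and `sin θ = v` gives `θ' = u v' - v u'`, which for the Gauss map of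
`x ↦ (x, x³)` is `6x / (1 + 9x⁴)`, while `a' = -6x²(1 + 3x⁴) / (1 + 9x⁴)^(3/2)`. Hence
`b = -x(1 + 3x⁴) / √(1 + 9x⁴)`, analytic because `1 + 9x⁴` never vanishes.
-/

theorem HasDerivAt.eq_of_cos_sin {θ u v : ℝ → ℝ} {θ' u' v' x : ℝ} (hθ : HasDerivAt θ θ' x)
    (hcos : ∀ t, Real.cos (θ t) = u t) (hsin : ∀ t, Real.sin (θ t) = v t)
    (hu : HasDerivAt u u' x) (hv : HasDerivAt v v' x) :
    θ' = u x * v' - v x * u' := by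
  have hu' : u' = -Real.sin (θ x) * θ' := hu.unique <| by simpa only [hcos] using hθ.cos
  have hv' : v' = Real.cos (θ x) * θ' := hv.unique <| by simpa only [hsin] using hθ.sin
  rw [hu', hv', ← hcos, ← hsin]
  linear_combination -θ' * Real.sin_sq_add_cos_sq (θ x)

theorem hasDerivAt_sqrt_one_add_nine_mul_pow_four (x : ℝ) :
    HasDerivAt (fun t : ℝ => √(1 + 9 * t ^ 4)) (18 * x ^ 3 / √(1 + 9 * x ^ 4)) x := by
  convert ((hasDerivAt_pow 4 x).const_mul 9 |>.const_add 1).sqrt (by positivity) using 1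
  field_simp
  ring

theorem cubic_angle_deriv_eq {θ : ℝ → ℝ} {θ' x : ℝ} (hθ : HasDerivAt θ θ' x)
    (hcos : ∀ t, Real.cos (θ t) = -3 * t ^ 2 / √(1 + 9 * t ^ 4))
    (hsin : ∀ t, Real.sin (θ t) = 1 / √(1 + 9 * t ^ 4)) :
    θ' = 6 * x / (1 + 9 * x ^ 4) := by
  have hs := hasDerivAt_sqrt_one_add_nine_mul_pow_four x
  have hs0 : √(1 + 9 * x ^ 4) ≠ 0 := by positivity
  rw [hθ.eq_of_cos_sin hcos hsin (((hasDerivAt_pow 2 x).const_mul (-3)).fun_div hs hs0)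
    ((hasDerivAt_const x 1).fun_div hs hs0)]
  have hs2 : √(1 + 9 * x ^ 4) ^ 2 = 1 + 9 * x ^ 4 := Real.sq_sqrt (by positivity)
  generalize √(1 + 9 * x ^ 4) = s at hs0 hs2 ⊢
  field_simp
  linear_combination (-6 * x * s ^ 2) * hs2

theorem cubic_hasDerivAt_height (x : ℝ) :
    HasDerivAt (fun t : ℝ => -2 * t ^ 3 / √(1 + 9 * t ^ 4))
      (-6 * x ^ 2 * (1 + 3 * x ^ 4) / √(1 + 9 * x ^ 4) ^ 3) x := by
  have hs0 : √(1 + 9 * x ^ 4) ≠ 0 := by positivity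
  refine (((hasDerivAt_pow 3 x).const_mul (-2)).fun_div
    (hasDerivAt_sqrt_one_add_nine_mul_pow_four x) hs0).congr_deriv ?_
  have hs2 : √(1 + 9 * x ^ 4) ^ 2 = 1 + 9 * x ^ 4 := Real.sq_sqrt (by positivity)
  generalize √(1 + 9 * x ^ 4) = s at hs0 hs2 ⊢
  field_simp
  linear_combination (-6 * x ^ 2) * hs2

/-- For the curve `f(x) = (x, x³)` with Gauss map angle `θ`
(`(cos θ, sin θ) = (1/√(1+9x⁴))(−3x², 1)`) and height function
`a(x) = −2x³/√(1+9x⁴)`, the derivative `a'` is divisible by `θ'`: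
there is a real-analytic `b : ℝ → ℝ` with `a'(x) = b(x)·θ'(x)` for all `x`. -/
theorem height_deriv_divisible_by_angle_deriv
    (θ : ℝ → ℝ) (hθ : Differentiable ℝ θ)
    (hcos : ∀ x : ℝ, Real.cos (θ x) = -3 * x ^ 2 / Real.sqrt (1 + 9 * x ^ 4))
    (hsin : ∀ x : ℝ, Real.sin (θ x) = 1 / Real.sqrt (1 + 9 * x ^ 4))
    (a : ℝ → ℝ) (ha : ∀ x : ℝ, a x = -2 * x ^ 3 / Real.sqrt (1 + 9 * x ^ 4)) :
    ∃ b : ℝ → ℝ, (∀ x : ℝ, AnalyticAt ℝ b x) ∧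
      ∀ x : ℝ, deriv a x = b x * deriv θ x := by
  refine ⟨fun x => -(x * (1 + 3 * x ^ 4)) / √(1 + 9 * x ^ 4), fun x => ?_, fun x => ?_⟩
  · exact (show ContDiffAt ℝ ω _ x by fun_prop (disch := positivity)).analyticAt
  · rw [funext ha, (cubic_hasDerivAt_height x).deriv, cubic_angle_deriv_eq (hθ x).hasDerivAt hcos hsin]
    beta_reduce
    have hs0 : √(1 + 9 * x ^ 4) ≠ 0 := by positivity
    have hs2 : √(1 + 9 * x ^ 4) ^ 2 = 1 + 9 * x ^ 4 := Real.sq_sqrt (by positivity)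
    generalize √(1 + 9 * x ^ 4) = s at hs0 hs2 ⊢
    field_simp
    linear_combination x ^ 2 * hs2
end

section
/- The perturbed cuspidal edge f: ℝ² → ℝ³, f(x,y) = (x, y² + x², y³), is a frontal, and its Gauss map ν(x,y) = (1/√(36x²y² + 9y² + 4))·(−6xy, 3y, −2) has a dense set of regular points in ℝ², so f is a regular frontal. -/
/-!
`ν` is analytic because it is of class `ω`: the square root is taken of a function bounded
below by `4`. The normal `(-6xy, 3y, -2)` is orthogonal to `f_x = (1, 2x, 0)` and
`f_y = (0, 2y, 3y²)`. For regularity, compose `ν` with the central projection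
`u ↦ (u₁/u₃, u₂/u₃)`: the normalising factor cancels and one obtains the polynomial map
`(x, y) ↦ (3xy, -3y/2)`, whose Jacobian determinant `-9y/2` vanishes only on the line `y = 0`.
So `dν` is injective off that line, whose complement is dense.
-/

def dot3 (u v : ℝ × ℝ × ℝ) : ℝ := u.1 * v.1 + u.2.1 * v.2.1 + u.2.2 * v.2.2

open scoped ContDiff

theorem dense_setOf_snd_ne {X Y : Type*} [TopologicalSpace X] [TopologicalSpace Y] (y : Y)
    [(nhdsWithin y {y}ᶜ).NeBot] : Dense {p : X × Y | p.2 ≠ y} :=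
  (dense_compl_singleton y).preimage isOpenMap_snd

theorem Function.Injective.of_fderiv_comp {𝕜 E F G : Type*} [NontriviallyNormedField 𝕜]
    [NormedAddCommGroup E] [NormedSpace 𝕜 E] [NormedAddCommGroup F] [NormedSpace 𝕜 F]
    [NormedAddCommGroup G] [NormedSpace 𝕜 G] {g : F → G} {f : E → F} {x : E}
    (hg : DifferentiableAt 𝕜 g (f x)) (hf : DifferentiableAt 𝕜 f x)
    (h : Function.Injective (fderiv 𝕜 (g ∘ f) x)) : Function.Injective (fderiv 𝕜 f x) := by
  rw [fderiv_comp x hg hf, ContinuousLinearMap.coe_comp] at h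
  exact h.of_comp

namespace PerturbedCuspidalEdge

def param (p : ℝ × ℝ) : ℝ × ℝ × ℝ := (p.1, p.2 ^ 2 + p.1 ^ 2, p.2 ^ 3)

noncomputable def normFactor (p : ℝ × ℝ) : ℝ := √(36 * p.1 ^ 2 * p.2 ^ 2 + 9 * p.2 ^ 2 + 4)

noncomputable def gaussMap (p : ℝ × ℝ) : ℝ × ℝ × ℝ :=
  (-6 * p.1 * p.2 / normFactor p, 3 * p.2 / normFactor p, -2 / normFactor p)

theorem normFactor_pos (p : ℝ × ℝ) : 0 < normFactor p := by
  unfold normFactor; positivity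

theorem contDiff_normFactor : ContDiff ℝ ω normFactor :=
  ContDiff.sqrt (by fun_prop) fun p => by positivity

theorem contDiff_gaussMap : ContDiff ℝ ω gaussMap := by
  have h := contDiff_normFactor
  have hne := fun p => (normFactor_pos p).ne'
  unfold gaussMap
  fun_prop (disch := exact hne _)

theorem dot3_gaussMap_self (p : ℝ × ℝ) : dot3 (gaussMap p) (gaussMap p) = 1 := by
  have hs := normFactor_pos p
  have hsq : normFactor p ^ 2 = 36 * p.1 ^ 2 * p.2 ^ 2 + 9 * p.2 ^ 2 + 4 :=
    Real.sq_sqrt (by positivity)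
  simp only [dot3, gaussMap]
  field_simp
  linarith

theorem fderiv_param_apply (p v : ℝ × ℝ) :
    fderiv ℝ param p v = (v.1, 2 * p.2 * v.2 + 2 * p.1 * v.1, 3 * p.2 ^ 2 * v.2) := by
  have h2 := ((hasFDerivAt_snd (𝕜 := ℝ) (p := p)).pow 2).add (hasFDerivAt_fst.pow 2)
  have h3 := (hasFDerivAt_snd (𝕜 := ℝ) (p := p)).pow 3
  have h : HasFDerivAt param _ p := hasFDerivAt_fst.prodMk (h2.prodMk h3)
  rw [h.fderiv]
  simp

theorem dot3_fderiv_param_gaussMap (p v : ℝ × ℝ) :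
    dot3 (fderiv ℝ param p v) (gaussMap p) = 0 := by
  have hs := (normFactor_pos p).ne'
  rw [fderiv_param_apply]
  simp only [dot3, gaussMap]
  field_simp
  ring

noncomputable def centralProjection (u : ℝ × ℝ × ℝ) : ℝ × ℝ := (u.1 / u.2.2, u.2.1 / u.2.2)

theorem differentiableAt_centralProjection {u : ℝ × ℝ × ℝ} (hu : u.2.2 ≠ 0) :
    DifferentiableAt ℝ centralProjection u := by
  unfold centralProjection
  fun_prop (disch := exact hu)

theorem centralProjection_comp_gaussMap :
    centralProjection ∘ gaussMap = fun p => (3 * p.1 * p.2, -(3 / 2) * p.2) := by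
  funext p
  have hs := (normFactor_pos p).ne'
  simp only [Function.comp_apply, centralProjection, gaussMap, Prod.mk.injEq]
  exact ⟨by field_simp; ring, by field_simp⟩

theorem fderiv_centralProjection_comp_gaussMap_apply (p v : ℝ × ℝ) :
    fderiv ℝ (centralProjection ∘ gaussMap) p v =
      (3 * (p.2 * v.1 + p.1 * v.2), -(3 / 2) * v.2) := by
  have h1 := ((hasFDerivAt_fst (𝕜 := ℝ) (p := p)).const_mul 3).mul hasFDerivAt_snd
  have h2 := (hasFDerivAt_snd (𝕜 := ℝ) (p := p)).const_mul (-(3 / 2))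
  have h : HasFDerivAt (fun p : ℝ × ℝ => (3 * p.1 * p.2, -(3 / 2) * p.2)) _ p := h1.prodMk h2
  rw [centralProjection_comp_gaussMap, h.fderiv]
  simp
  ring

theorem injective_fderiv_gaussMap {p : ℝ × ℝ} (hp : p.2 ≠ 0) :
    Function.Injective (fderiv ℝ gaussMap p) := by
  have hν : (gaussMap p).2.2 ≠ 0 := div_ne_zero (by norm_num) (normFactor_pos p).ne'
  refine .of_fderiv_comp (differentiableAt_centralProjection hν)
    (contDiff_gaussMap.differentiable (by simp) p) ((injective_iff_map_eq_zero _).2 fun v hv => ?_)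
  rw [fderiv_centralProjection_comp_gaussMap_apply, Prod.mk_eq_zero] at hv
  have hv2 : v.2 = 0 := by linarith [hv.2]
  have hv1 : v.1 = 0 := by simpa [hv2, hp] using hv.1
  exact Prod.ext hv1 hv2

end PerturbedCuspidalEdge

open PerturbedCuspidalEdge in
/-- The perturbed cuspidal edge `f(x,y) = (x, y² + x², y³)` is a frontal with
Gauss map `ν(x,y) = (1/√(36x²y² + 9y² + 4))·(−6xy, 3y, −2)`, and the set of
regular points of `ν` is dense in `ℝ²`, so `f` is a regular frontal. -/
theorem perturbed_cuspidal_edge_regular_frontal :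
    let f : ℝ × ℝ → ℝ × ℝ × ℝ := fun p => (p.1, p.2 ^ 2 + p.1 ^ 2, p.2 ^ 3)
    let ν : ℝ × ℝ → ℝ × ℝ × ℝ := fun p =>
      (-6 * p.1 * p.2 / Real.sqrt (36 * p.1 ^ 2 * p.2 ^ 2 + 9 * p.2 ^ 2 + 4),
        3 * p.2 / Real.sqrt (36 * p.1 ^ 2 * p.2 ^ 2 + 9 * p.2 ^ 2 + 4),
        -2 / Real.sqrt (36 * p.1 ^ 2 * p.2 ^ 2 + 9 * p.2 ^ 2 + 4))
    (∀ p : ℝ × ℝ, AnalyticAt ℝ ν p) ∧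
    (∀ p : ℝ × ℝ, dot3 (ν p) (ν p) = 1) ∧
    (∀ p : ℝ × ℝ, dot3 (fderiv ℝ f p (1, 0)) (ν p) = 0) ∧
    (∀ p : ℝ × ℝ, dot3 (fderiv ℝ f p (0, 1)) (ν p) = 0) ∧
    Dense {p : ℝ × ℝ | Function.Injective (fderiv ℝ ν p)} :=
  ⟨fun _ => contDiff_gaussMap.contDiffAt.analyticAt, dot3_gaussMap_self,
    fun p => dot3_fderiv_param_gaussMap p _, fun p => dot3_fderiv_param_gaussMap p _,
    (dense_setOf_snd_ne 0).mono fun _ => injective_fderiv_gaussMap⟩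
end

section
/- Let f: U → ℝ^{n+1} be a pseudo regular frontal with Gauss map ν: Reg(f) → S^n and height function a = f·ν. Write ν = ν^n ∘ θ with θ = (θ₁,…,θₙ): Reg(f) → (−π,π)^n. Then at every regular point x of ν, the map dθ_x is a linear isomorphism, and consequently the linear system da = b₁ dθ₁ + ⋯ + bₙ dθₙ has a unique solution (b₁(x),…,bₙ(x)); moreover f(x) = a(x)ν(x) + Σⱼ (bⱼ(x)/|μ̃ⱼ(θ(x))|) μⱼ(x), where μⱼ = (μ̃ⱼ/|μ̃ⱼ|) ∘ θ. -/
open Real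

/-- The standard spherical coordinate parametrization `νⁿ : (−π,π)ⁿ → Sⁿ`. -/
noncomputable def sphParam (n : ℕ) (θ : Fin n → ℝ) : Fin (n + 1) → ℝ :=
  fun j =>
    if h : (j : ℕ) = 0 then ∏ i, Real.cos (θ i)
    else
      Real.sin (θ ⟨n - j, by have := j.isLt; omega⟩) *
        ∏ i ∈ Finset.univ.filter (fun i : Fin n => (i : ℕ) < n - (j : ℕ)),
          Real.cos (θ i)

/-- The partial derivative `μ̃ⱼ = ∂νⁿ/∂θⱼ`. -/
noncomputable def sphPartial (n : ℕ) (j : Fin n) (θ : Fin n → ℝ) :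
    Fin (n + 1) → ℝ :=
  fderiv ℝ (sphParam n) θ (Pi.single j 1)

/-!
Write `ν = νⁿ ∘ θ`. The chain rule gives `dν = dνⁿ ∘ dθ`, so injectivity of `dν` makes `dθ`
injective, hence bijective, and then `dνⁿ` injective at `θ x`. Since `df ⊥ ν`, differentiating
`a = f · ν` gives `da = f · dν = Σⱼ (f · μ̃ⱼ) dθⱼ`, so `bⱼ = f · μ̃ⱼ` is the unique solution, and
expanding `f` in the orthogonal frame `ν, μ̃₁, …, μ̃ₙ` of `ℝⁿ⁺¹` gives the recovery formula.
Orthogonality of the frame follows by induction on `n` from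
`νⁿ⁺¹(θ) = (cos θ₀ · νⁿ(θ₁, …, θₙ), sin θ₀)`.
-/
open scoped Matrix Topology

lemma add_smul_single_zero_apply_zero {R : Type*} [Semiring R] {n : ℕ} (θ : Fin (n + 1) → R)
    (t : R) : (θ + t • Pi.single 0 1 : Fin (n + 1) → R) 0 = θ 0 + t := by
  simp

lemma tail_add_smul_single_zero {R : Type*} [Semiring R] {n : ℕ} (θ : Fin (n + 1) → R) (t : R) :
    Fin.tail (θ + t • Pi.single 0 1) = Fin.tail θ := by
  ext i; simp [Fin.tail, Fin.succ_ne_zero]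

lemma add_smul_single_succ_apply_zero {R : Type*} [Semiring R] {n : ℕ} (θ : Fin (n + 1) → R)
    (j : Fin n) (t : R) : (θ + t • Pi.single j.succ 1 : Fin (n + 1) → R) 0 = θ 0 := by
  simp [(Fin.succ_ne_zero j).symm]

lemma tail_add_smul_single_succ {R : Type*} [Semiring R] {n : ℕ} (θ : Fin (n + 1) → R)
    (j : Fin n) (t : R) :
    Fin.tail (θ + t • Pi.single j.succ 1) = Fin.tail θ + t • Pi.single j 1 := by
  ext i; simp [Fin.tail, Pi.single_apply]

lemma dotProduct_eq_comp_castSucc_add {R : Type*} [CommSemiring R] {m : ℕ}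
    (u v : Fin (m + 1) → R) :
    u ⬝ᵥ v = (u ∘ Fin.castSucc) ⬝ᵥ (v ∘ Fin.castSucc) + u (Fin.last m) * v (Fin.last m) :=
  Fin.sum_univ_castSucc _

open Matrix in
theorem sum_dotProduct_div_smul_of_pairwise_orthogonal {K ι : Type*} [Field K] [Fintype ι]
    [DecidableEq ι] (e : ι → ι → K) (horth : Pairwise fun i j => e i ⬝ᵥ e j = 0)
    (hne : ∀ i, e i ⬝ᵥ e i ≠ 0) (w : ι → K) :
    ∑ i, (w ⬝ᵥ e i / (e i ⬝ᵥ e i)) • e i = w := by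
  let E : Matrix ι ι K := e
  let D : Matrix ι ι K := diagonal fun i => (e i ⬝ᵥ e i)⁻¹
  have hgram : D * E * Eᵀ = 1 := by
    ext i j
    rw [Matrix.mul_assoc, diagonal_mul, mul_apply', one_apply]
    change (e i ⬝ᵥ e i)⁻¹ * (e i ⬝ᵥ e j) = _
    rcases eq_or_ne i j with rfl | hij
    · simp [hne i]
    · simp [horth hij, hij]
  -- a one-sided inverse of a square matrix is two-sided
  have hinv : Eᵀ * (D * E) = 1 := mul_eq_one_comm.1 hgram
  calc ∑ i, (w ⬝ᵥ e i / (e i ⬝ᵥ e i)) • e i = Eᵀ *ᵥ (D *ᵥ (E *ᵥ w)) := by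
        rw [mulVec_transpose, vecMul_eq_sum]
        refine Finset.sum_congr rfl fun i _ => ?_
        rw [mulVec_diagonal, div_eq_inv_mul, dotProduct_comm w]
        rfl
    _ = w := by rw [mulVec_mulVec, mulVec_mulVec, Matrix.mul_assoc, hinv, one_mulVec]

theorem eq_of_forall_dotProduct_eq_of_surjective {R α ι : Type*} [CommSemiring R] [Fintype ι]
    [DecidableEq ι] {T : α → ι → R} (hT : Function.Surjective T) {b c : ι → R}
    (h : ∀ v, b ⬝ᵥ T v = c ⬝ᵥ T v) : b = c := by
  funext j
  obtain ⟨v, hv⟩ := hT (Pi.single j 1)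
  simpa [hv, dotProduct_single] using h v

section Calculus

variable {E : Type*} [NormedAddCommGroup E] [NormedSpace ℝ E]

theorem isOpen_setOf_mem_and_injective_fderiv [FiniteDimensional ℝ E] {F : Type*}
    [NormedAddCommGroup F] [NormedSpace ℝ F] {f : E → F} {U : Set E} (hU : IsOpen U)
    (hf : ContinuousOn (fderiv ℝ f) U) :
    IsOpen {x | x ∈ U ∧ Function.Injective (fderiv ℝ f x)} :=
  hf.isOpen_inter_preimage hU ContinuousLinearMap.isOpen_injective

theorem fderiv_dotProduct_apply {ι : Type*} [Fintype ι] {u v : E → ι → ℝ} {x : E}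
    (hu : DifferentiableAt ℝ u x) (hv : DifferentiableAt ℝ v x) (w : E) :
    fderiv ℝ (fun y => u y ⬝ᵥ v y) x w = fderiv ℝ u x w ⬝ᵥ v x + u x ⬝ᵥ fderiv ℝ v x w := by
  have hsum := HasFDerivAt.fun_sum (u := Finset.univ) fun i _ =>
    (hasFDerivAt_pi'.1 hu.hasFDerivAt i).fun_mul (hasFDerivAt_pi'.1 hv.hasFDerivAt i)
  simp only [dotProduct]
  rw [hsum.fderiv, ← Finset.sum_add_distrib]
  simp only [FunLike.coe_sum, Finset.sum_apply, add_apply, smul_apply,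
    ContinuousLinearMap.comp_apply, ContinuousLinearMap.proj_apply,
    smul_eq_mul]
  exact Finset.sum_congr rfl fun i _ => by ring

theorem fderiv_apply_eq_dotProduct_of_fderiv_orthogonal {ι : Type*} [Fintype ι] {a : E → ℝ}
    {f ν : E → ι → ℝ} {x : E} (ha : a =ᶠ[𝓝 x] fun y => f y ⬝ᵥ ν y)
    (hf : DifferentiableAt ℝ f x) (hν : DifferentiableAt ℝ ν x) (w : E)
    (horth : fderiv ℝ f x w ⬝ᵥ ν x = 0) :
    fderiv ℝ a x w = f x ⬝ᵥ fderiv ℝ ν x w := by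
  rw [ha.fderiv_eq, fderiv_dotProduct_apply hf hν, horth, zero_add]

end Calculus

lemma sphParam_succ_castSucc (n : ℕ) (θ : Fin (n + 1) → ℝ) (k : Fin (n + 1)) :
    sphParam (n + 1) θ k.castSucc = cos (θ 0) * sphParam n (Fin.tail θ) k := by
  rcases eq_or_ne (k : ℕ) 0 with hk | hk
  · simp [sphParam, hk, Fin.prod_univ_succ, Fin.tail]
  · have hk' := k.isLt
    simp only [sphParam, Fin.val_castSucc, hk, dite_false, Finset.prod_filter,
      Fin.prod_univ_succ, Fin.val_zero, Fin.val_succ, Fin.tail]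
    have hidx : (⟨n + 1 - k, by omega⟩ : Fin (n + 1)) = (⟨n - k, by omega⟩ : Fin n).succ := by
      ext; simp; omega
    simp only [hidx, show 0 < n + 1 - k by omega, if_true,
      show ∀ i : ℕ, (i + 1 < n + 1 - k ↔ i < n - k) from fun i => by omega]
    ring

lemma sphParam_succ_last (n : ℕ) (θ : Fin (n + 1) → ℝ) :
    sphParam (n + 1) θ (Fin.last (n + 1)) = sin (θ 0) := by
  simp [sphParam]

lemma differentiable_sphParam (n : ℕ) : Differentiable ℝ (sphParam n) := by
  refine differentiable_pi.2 fun j => ?_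
  by_cases hj : (j : ℕ) = 0 <;> simp only [sphParam, hj, dite_true, dite_false] <;> fun_prop

lemma hasDerivAt_sphParam_add_smul_single (n : ℕ) (θ : Fin n → ℝ) (j : Fin n) (k : Fin (n + 1)) :
    HasDerivAt (fun t : ℝ => sphParam n (θ + t • Pi.single j 1) k) (sphPartial n j θ k) 0 := by
  have hline : HasDerivAt (fun t : ℝ => θ + t • Pi.single j (1 : ℝ)) (Pi.single j 1) 0 := by
    simpa using ((hasDerivAt_id (0 : ℝ)).smul_const (Pi.single j (1 : ℝ))).const_add θ
  exact hasDerivAt_pi.1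
    ((differentiable_sphParam n θ).hasFDerivAt.comp_hasDerivAt_of_eq 0 hline (by simp)) k

lemma sphPartial_succ_zero_castSucc (n : ℕ) (θ : Fin (n + 1) → ℝ) (k : Fin (n + 1)) :
    sphPartial (n + 1) 0 θ k.castSucc = -sin (θ 0) * sphParam n (Fin.tail θ) k := by
  refine (hasDerivAt_sphParam_add_smul_single (n + 1) θ 0 k.castSucc).unique ?_
  simp only [sphParam_succ_castSucc, add_smul_single_zero_apply_zero, tail_add_smul_single_zero]
  simpa using ((hasDerivAt_id (0 : ℝ)).const_add (θ 0)).cos.mul_const (sphParam n (Fin.tail θ) k)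

lemma sphPartial_succ_zero_last (n : ℕ) (θ : Fin (n + 1) → ℝ) :
    sphPartial (n + 1) 0 θ (Fin.last (n + 1)) = cos (θ 0) := by
  refine (hasDerivAt_sphParam_add_smul_single (n + 1) θ 0 _).unique ?_
  simp only [sphParam_succ_last, add_smul_single_zero_apply_zero]
  simpa using ((hasDerivAt_id (0 : ℝ)).const_add (θ 0)).sin

lemma sphPartial_succ_succ_castSucc (n : ℕ) (θ : Fin (n + 1) → ℝ) (j : Fin n)
    (k : Fin (n + 1)) :
    sphPartial (n + 1) j.succ θ k.castSucc = cos (θ 0) * sphPartial n j (Fin.tail θ) k := by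
  refine (hasDerivAt_sphParam_add_smul_single (n + 1) θ j.succ k.castSucc).unique ?_
  simp only [sphParam_succ_castSucc, add_smul_single_succ_apply_zero, tail_add_smul_single_succ]
  exact (hasDerivAt_sphParam_add_smul_single n (Fin.tail θ) j k).const_mul (cos (θ 0))

lemma sphPartial_succ_succ_last (n : ℕ) (θ : Fin (n + 1) → ℝ) (j : Fin n) :
    sphPartial (n + 1) j.succ θ (Fin.last (n + 1)) = 0 := by
  refine (hasDerivAt_sphParam_add_smul_single (n + 1) θ j.succ _).unique ?_
  simp only [sphParam_succ_last, add_smul_single_succ_apply_zero]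
  exact hasDerivAt_const (0 : ℝ) (sin (θ 0))

lemma sphParam_succ_comp_castSucc (n : ℕ) (θ : Fin (n + 1) → ℝ) :
    sphParam (n + 1) θ ∘ Fin.castSucc = cos (θ 0) • sphParam n (Fin.tail θ) :=
  funext (sphParam_succ_castSucc n θ)

lemma sphPartial_succ_zero_comp_castSucc (n : ℕ) (θ : Fin (n + 1) → ℝ) :
    sphPartial (n + 1) 0 θ ∘ Fin.castSucc = -sin (θ 0) • sphParam n (Fin.tail θ) :=
  funext (sphPartial_succ_zero_castSucc n θ)

lemma sphPartial_succ_succ_comp_castSucc (n : ℕ) (θ : Fin (n + 1) → ℝ) (j : Fin n) :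
    sphPartial (n + 1) j.succ θ ∘ Fin.castSucc = cos (θ 0) • sphPartial n j (Fin.tail θ) :=
  funext (sphPartial_succ_succ_castSucc n θ j)

theorem sphParam_dotProduct_self (n : ℕ) (θ : Fin n → ℝ) :
    sphParam n θ ⬝ᵥ sphParam n θ = 1 := by
  induction n with
  | zero => simp [sphParam, dotProduct]
  | succ n ih =>
    rw [dotProduct_eq_comp_castSucc_add, sphParam_succ_comp_castSucc, sphParam_succ_last,
      smul_dotProduct, dotProduct_smul, ih, smul_eq_mul, smul_eq_mul]
    linear_combination cos_sq_add_sin_sq (θ 0)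

theorem sphParam_dotProduct_sphPartial (n : ℕ) (θ : Fin n → ℝ) (j : Fin n) :
    sphParam n θ ⬝ᵥ sphPartial n j θ = 0 := by
  induction n with
  | zero => exact j.elim0
  | succ n ih =>
    rw [dotProduct_eq_comp_castSucc_add, sphParam_succ_comp_castSucc, sphParam_succ_last]
    cases j using Fin.cases with
    | zero =>
      rw [sphPartial_succ_zero_comp_castSucc, sphPartial_succ_zero_last, smul_dotProduct,
        dotProduct_smul, sphParam_dotProduct_self, smul_eq_mul, smul_eq_mul]
      ring
    | succ j =>
      rw [sphPartial_succ_succ_comp_castSucc, sphPartial_succ_succ_last, smul_dotProduct,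
        dotProduct_smul, ih]
      simp

theorem sphPartial_dotProduct_sphPartial (n : ℕ) (θ : Fin n → ℝ) {i j : Fin n} (hij : i ≠ j) :
    sphPartial n i θ ⬝ᵥ sphPartial n j θ = 0 := by
  induction n with
  | zero => exact i.elim0
  | succ n ih =>
    rw [dotProduct_eq_comp_castSucc_add]
    cases i using Fin.cases with
    | zero =>
      cases j using Fin.cases with
      | zero => exact absurd rfl hij
      | succ j =>
        rw [sphPartial_succ_zero_comp_castSucc, sphPartial_succ_succ_comp_castSucc,
          sphPartial_succ_succ_last, smul_dotProduct, dotProduct_smul,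
          sphParam_dotProduct_sphPartial]
        simp
    | succ i =>
      rw [sphPartial_succ_succ_comp_castSucc, sphPartial_succ_succ_last, smul_dotProduct]
      cases j using Fin.cases with
      | zero =>
        rw [sphPartial_succ_zero_comp_castSucc, dotProduct_smul, dotProduct_comm,
          sphParam_dotProduct_sphPartial]
        simp
      | succ j =>
        rw [sphPartial_succ_succ_comp_castSucc, dotProduct_smul,
          ih _ (fun h => hij (congrArg Fin.succ h))]
        simp

theorem apply_eq_sphParam_add_sum_sphPartial (n : ℕ) (θ : Fin n → ℝ)
    (hD : Function.Injective (fderiv ℝ (sphParam n) θ)) (w : Fin (n + 1) → ℝ)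
    (k : Fin (n + 1)) :
    w k = (w ⬝ᵥ sphParam n θ) * sphParam n θ k +
      ∑ j, (w ⬝ᵥ sphPartial n j θ / √(∑ l, sphPartial n j θ l ^ 2)) *
        (sphPartial n j θ k / √(∑ l, sphPartial n j θ l ^ 2)) := by
  have hμ (j : Fin n) : sphPartial n j θ ⬝ᵥ sphPartial n j θ ≠ 0 := by
    rw [Ne, dotProduct_self_eq_zero]
    exact hD.ne_iff' (map_zero _) |>.2 (Pi.single_ne_zero_iff.2 one_ne_zero)
  let e : Fin (n + 1) → Fin (n + 1) → ℝ := Fin.cons (sphParam n θ) fun j => sphPartial n j θ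
  have horth : Pairwise fun i j => e i ⬝ᵥ e j = 0 := by
    intro i j hij
    cases i using Fin.cases <;> cases j using Fin.cases
    · exact absurd rfl hij
    · exact sphParam_dotProduct_sphPartial n θ _
    · exact (dotProduct_comm _ _).trans (sphParam_dotProduct_sphPartial n θ _)
    · exact sphPartial_dotProduct_sphPartial n θ fun h => hij (congrArg Fin.succ h)
  have hne : ∀ i, e i ⬝ᵥ e i ≠ 0 := Fin.cases (by simp [e, sphParam_dotProduct_self]) hμ
  conv_lhs => rw [← sum_dotProduct_div_smul_of_pairwise_orthogonal e horth hne w]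
  rw [Finset.sum_apply, Fin.sum_univ_succ]
  simp only [Pi.smul_apply, smul_eq_mul, e, Fin.cons_zero,
    Fin.cons_succ, sphParam_dotProduct_self, div_one]
  congr 1
  refine Finset.sum_congr rfl fun j _ => ?_
  rw [div_mul_div_comm, Real.mul_self_sqrt (by positivity), div_mul_eq_mul_div]
  simp only [dotProduct, sq]

theorem fderiv_sphParam_apply (n : ℕ) (θ w : Fin n → ℝ) :
    fderiv ℝ (sphParam n) θ w = ∑ j, w j • sphPartial n j θ := by
  conv_lhs => rw [← Finset.univ_sum_single w]
  simp only [map_sum, sphPartial]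
  refine Finset.sum_congr rfl fun j _ => ?_
  rw [← map_smul]
  congr 1
  ext i
  simp [Pi.single_apply]

theorem dotProduct_fderiv_sphParam (n : ℕ) (u : Fin (n + 1) → ℝ) (θ w : Fin n → ℝ) :
    u ⬝ᵥ fderiv ℝ (sphParam n) θ w = (fun j => u ⬝ᵥ sphPartial n j θ) ⬝ᵥ w := by
  rw [fderiv_sphParam_apply, dotProduct_sum]
  simp only [dotProduct_smul, smul_eq_mul]
  exact Finset.sum_congr rfl fun j _ => mul_comm _ _

theorem pseudo_regular_frontal_recovery_general (n : ℕ)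
    (U : Set (Fin n → ℝ)) (hUo : IsOpen U)
    (f : (Fin n → ℝ) → (Fin (n + 1) → ℝ)) (hf : AnalyticOnNhd ℝ f U)
    (Regf : Set (Fin n → ℝ))
    (hRegf : Regf = {x | x ∈ U ∧ Function.Injective (fderiv ℝ f x)})
    (θ : (Fin n → ℝ) → (Fin n → ℝ))
    (hθdiff : ∀ x ∈ Regf, DifferentiableAt ℝ θ x)
    (ν : (Fin n → ℝ) → (Fin (n + 1) → ℝ))
    (hν : ∀ x ∈ Regf, ν x = sphParam n (θ x))
    (hGauss : ∀ x ∈ Regf, ∀ v : Fin n → ℝ,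
      ∑ k, fderiv ℝ f x v k * ν x k = 0)
    (a : (Fin n → ℝ) → ℝ) (ha : ∀ x ∈ Regf, a x = ∑ k, f x k * ν x k)
    (Regν : Set (Fin n → ℝ))
    (hRegν : Regν = {x | x ∈ Regf ∧ Function.Injective (fderiv ℝ ν x)}) :
    ∀ x ∈ Regν,
      Function.Bijective (fderiv ℝ θ x) ∧
      (∃! b : Fin n → ℝ, ∀ v : Fin n → ℝ,
        fderiv ℝ a x v = ∑ j, b j * fderiv ℝ θ x v j) ∧
      (∀ b : Fin n → ℝ,
        (∀ v : Fin n → ℝ,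
          fderiv ℝ a x v = ∑ j, b j * fderiv ℝ θ x v j) →
        ∀ k : Fin (n + 1),
          f x k = a x * ν x k +
            ∑ j, (b j / Real.sqrt (∑ l, (sphPartial n j (θ x) l) ^ 2)) *
              (sphPartial n j (θ x) k /
                Real.sqrt (∑ l, (sphPartial n j (θ x) l) ^ 2))) := by
  intro x hx
  obtain ⟨hxf, hνinj⟩ := hRegν ▸ hx
  have hRegf_nhds : Regf ∈ 𝓝 x := by
    rw [hRegf] at hxf ⊢
    exact (isOpen_setOf_mem_and_injective_fderiv hUo hf.fderiv.continuousOn).mem_nhds hxf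
  have hfx : DifferentiableAt ℝ f x := (hf x (hRegf ▸ hxf).1).differentiableAt
  have hν_near : ν =ᶠ[𝓝 x] sphParam n ∘ θ := Filter.eventually_of_mem hRegf_nhds hν
  have hdν : fderiv ℝ ν x = (fderiv ℝ (sphParam n) (θ x)).comp (fderiv ℝ θ x) := by
    rw [hν_near.fderiv_eq, fderiv_comp x (differentiable_sphParam n _) (hθdiff x hxf)]
  rw [hdν, ContinuousLinearMap.coe_comp] at hνinj
  have hθinj : Function.Injective (fderiv ℝ θ x) := hνinj.of_comp
  have hθsurj : Function.Surjective (fderiv ℝ θ x) :=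
    LinearMap.injective_iff_surjective.1 hθinj
  have hνx : DifferentiableAt ℝ ν x :=
    ((differentiable_sphParam n _).comp x (hθdiff x hxf)).congr_of_eventuallyEq hν_near
  set b : Fin n → ℝ := fun j => f x ⬝ᵥ sphPartial n j (θ x)
  have hda (v : Fin n → ℝ) : fderiv ℝ a x v = b ⬝ᵥ fderiv ℝ θ x v := by
    rw [fderiv_apply_eq_dotProduct_of_fderiv_orthogonal (Filter.eventually_of_mem hRegf_nhds ha)
      hfx hνx v (hGauss x hxf v), hdν, ContinuousLinearMap.comp_apply, dotProduct_fderiv_sphParam]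
  have hb_unique (c : Fin n → ℝ) (hc : ∀ v, fderiv ℝ a x v = c ⬝ᵥ fderiv ℝ θ x v) : c = b :=
    eq_of_forall_dotProduct_eq_of_surjective hθsurj fun v => (hc v).symm.trans (hda v)
  refine ⟨⟨hθinj, hθsurj⟩, ⟨b, hda, hb_unique⟩, fun c hc k => ?_⟩
  rw [hb_unique c hc, ha x hxf, hν x hxf]
  exact apply_eq_sphParam_add_sum_sphPartial n (θ x) (hνinj.of_comp_right hθsurj) (f x) k

/-- Recovery of a pseudo regular frontal from its Legendre data.  Let
`f : U → ℝⁿ⁺¹` be a pseudo regular frontal with Gauss map `ν = νⁿ ∘ θ`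
(`θ : Reg(f) → (−π,π)ⁿ`) and height function `a = f·ν`.  At every regular
point `x` of `ν`, the differential `dθₓ` is a linear isomorphism, the system
`da = b₁ dθ₁ + ⋯ + bₙ dθₙ` has a unique solution `b`, and
`f(x) = a(x)ν(x) + Σⱼ (bⱼ/|μ̃ⱼ(θ(x))|)·μ̃ⱼ(θ(x))/|μ̃ⱼ(θ(x))|`. -/
theorem pseudo_regular_frontal_recovery (n : ℕ)
    (U : Set (Fin n → ℝ)) (hUo : IsOpen U)
    (f : (Fin n → ℝ) → (Fin (n + 1) → ℝ)) (hf : AnalyticOnNhd ℝ f U)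
    (Regf : Set (Fin n → ℝ))
    (hRegf : Regf = {x | x ∈ U ∧ Function.Injective (fderiv ℝ f x)})
    (hRegfDense : U ⊆ closure Regf)
    (θ : (Fin n → ℝ) → (Fin n → ℝ))
    (hθdiff : ∀ x ∈ Regf, DifferentiableAt ℝ θ x)
    (hθrange : ∀ x ∈ Regf, ∀ i : Fin n, θ x i ∈ Set.Ioo (-π) π)
    (ν : (Fin n → ℝ) → (Fin (n + 1) → ℝ))
    (hν : ∀ x ∈ Regf, ν x = sphParam n (θ x))
    (hGauss : ∀ x ∈ Regf, ∀ v : Fin n → ℝ,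
      ∑ k, fderiv ℝ f x v k * ν x k = 0)
    (a : (Fin n → ℝ) → ℝ) (ha : ∀ x ∈ Regf, a x = ∑ k, f x k * ν x k)
    (Regν : Set (Fin n → ℝ))
    (hRegν : Regν = {x | x ∈ Regf ∧ Function.Injective (fderiv ℝ ν x)})
    (hRegνDense : Regf ⊆ closure Regν) :
    ∀ x ∈ Regν,
      Function.Bijective (fderiv ℝ θ x) ∧
      (∃! b : Fin n → ℝ, ∀ v : Fin n → ℝ,
        fderiv ℝ a x v = ∑ j, b j * fderiv ℝ θ x v j) ∧
      (∀ b : Fin n → ℝ,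
        (∀ v : Fin n → ℝ,
          fderiv ℝ a x v = ∑ j, b j * fderiv ℝ θ x v j) →
        ∀ k : Fin (n + 1),
          f x k = a x * ν x k +
            ∑ j, (b j / Real.sqrt (∑ l, (sphPartial n j (θ x) l) ^ 2)) *
              (sphPartial n j (θ x) k /
                Real.sqrt (∑ l, (sphPartial n j (θ x) l) ^ 2))) :=
  pseudo_regular_frontal_recovery_general n U hUo f hf Regf hRegf θ hθdiff ν hν hGauss a ha Regν
    hRegν
end
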